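/- Suppose gcd(m,n) = d, and let x ∈ V^m be a fixed point of a word p ∈ [m]^n (under the letter-action on V^m) with all coordinates of x pairwise non-congruent modulo m. Then the coordinates of x can be partitioned into d blocks of size m/d such that two coordinates lie in the same block if and only if their difference is divisible by d; moreover no two distinct coordinates differ by a multiple of m. -/

import Mathlib

/-- The shift during the action of letter `i` on `ℝ^m`: add `m` to coordinate `i`
and subtract `1` from every coordinate. -/
def shiftVec (m : ℕ) (i : Fin m) (x : Fin m → ℝ) : Fin m → ℝ :=
  fun j => x j - 1 + if j = i then (m : ℝ) else 0

/-- Sort the coordinates of a vector into weakly increasing order. -/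
noncomputable def sortVec {m : ℕ} (x : Fin m → ℝ) : Fin m → ℝ := x ∘ Tuple.sort x

/-- The action of the letter `i ∈ [m]` on `V^m`: shift, then re-sort. -/
noncomputable def letterV (m : ℕ) (i : Fin m) (x : Fin m → ℝ) : Fin m → ℝ :=
  sortVec (shiftVec m i x)

/-- `stepsV m p x i = p_{i-1} ⋯ p_1 p_0 ⋅ x`: the word acts letter by letter, the
letter `p 0` (rightmost) acting first. -/
noncomputable def stepsV (m : ℕ) (p : ℕ → Fin m) (x : Fin m → ℝ) : ℕ → (Fin m → ℝ)
  | 0 => x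
  | k+1 => letterV m (p k) (stepsV m p x k)

/-- Membership in the Weyl chamber `V^m`: coordinates sum to `0` and are weakly
increasing. -/
def InV (m : ℕ) (x : Fin m → ℝ) : Prop := (∑ j, x j) = 0 ∧ Monotone x

/-- The Euclidean norm on `ℝ^m`. -/
noncomputable def eNorm {m : ℕ} (x : Fin m → ℝ) : ℝ := Real.sqrt (∑ j, (x j) ^ 2)

/-! Let `d = gcd m n`. Every letter permutes the coordinates and lowers them by `1` modulo `m`,
so a fixed point `x` of a word of length `n` comes with a permutation `σ` such that
`x (σ j) ≡ x j + n [PMOD m]`. The orbit points `σ^i j`, `i < m / d`, are then distinct and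
congruent to `x j` modulo `d`, so each class modulo `d` has at least `m / d` coordinates.
It has at most `m / d`, because `x j + d ℤ` meets only `m / d` classes modulo `m` and the
coordinates are distinct modulo `m`. Hence there are exactly `d` classes. -/

open Finset AddCommGroup

theorem AddCommGroup.modEq_iff_exists_sub_eq_mul {R : Type*} [Ring R] {p a b : R} :
    a ≡ b [PMOD p] ↔ ∃ t : ℤ, b - a = p * t := by
  simp only [modEq_iff_zsmul', zsmul_eq_mul, Int.cast_comm]

theorem AddCommGroup.ModEq.of_natCast_dvd {R : Type*} [Ring R] {a b : R} {d m : ℕ}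
    (hdm : d ∣ m) (h : a ≡ b [PMOD (m : R)]) : a ≡ b [PMOD (d : R)] := by
  obtain ⟨k, rfl⟩ := hdm
  rw [Nat.cast_mul, ← Nat.cast_comm, ← nsmul_eq_mul] at h
  exact h.of_nsmul

theorem exists_fin_of_card_fiber_eq {ι β : Type*} [Fintype ι] [DecidableEq β] (f : ι → β)
    {d s : ℕ} (hs : 0 < s) (hι : Fintype.card ι = d * s) (hf : ∀ j, #{k | f k = f j} = s) :
    ∃ B : ι → Fin d, (∀ c, #{j | B j = c} = s) ∧ ∀ j k, B j = B k ↔ f j = f k := by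
  have hT : #(univ.image f) = d := by
    have h := card_eq_sum_card_image f univ
    rw [card_univ, hι, sum_congr rfl fun b hb => ?_, sum_const, smul_eq_mul] at h
    · exact (Nat.eq_of_mul_eq_mul_right hs h).symm
    obtain ⟨j, -, rfl⟩ := mem_image.mp hb
    exact hf j
  let e : univ.image f ≃ Fin d := (univ.image f).equivFinOfCardEq hT
  refine ⟨fun j => e ⟨f j, mem_image_of_mem f (mem_univ j)⟩, fun c => ?_, fun j k => ?_⟩
  · obtain ⟨j, -, hj⟩ := mem_image.mp (e.symm c).2
    rw [← hf j]
    congr 1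
    ext k
    simp [← e.eq_symm_apply, ← hj, Subtype.ext_iff]
  · simp [Subtype.ext_iff]

section Word

variable {m : ℕ}

theorem exists_perm_letterV_modEq (i : Fin m) (y : Fin m → ℝ) :
    ∃ τ : Equiv.Perm (Fin m), ∀ j, letterV m i y j ≡ y (τ j) - 1 [PMOD (m : ℝ)] := by
  refine ⟨Tuple.sort (shiftVec m i y), fun j => ?_⟩
  show y _ - 1 + _ ≡ _ [PMOD (m : ℝ)]
  rw [add_modEq_left]
  split_ifs
  exacts [self_modEq_zero, modEq_rfl]

theorem exists_perm_stepsV_modEq (p : ℕ → Fin m) (x : Fin m → ℝ) (k : ℕ) :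
    ∃ e : Equiv.Perm (Fin m), ∀ j, stepsV m p x k j ≡ x (e j) - k [PMOD (m : ℝ)] := by
  induction k with
  | zero => exact ⟨1, fun j => by simp [stepsV]⟩
  | succ k ih =>
    obtain ⟨e, he⟩ := ih
    obtain ⟨τ, hτ⟩ := exists_perm_letterV_modEq (p k) (stepsV m p x k)
    refine ⟨τ.trans e, fun j => (hτ j).trans ?_⟩
    simpa [sub_sub] using (he (τ j)).sub_right 1

theorem exists_perm_modEq_of_stepsV_eq_self {p : ℕ → Fin m} {x : Fin m → ℝ} {n : ℕ}
    (hfix : stepsV m p x n = x) :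
    ∃ σ : Equiv.Perm (Fin m), ∀ j, x (σ j) ≡ x j + n [PMOD (m : ℝ)] := by
  obtain ⟨e, he⟩ := exists_perm_stepsV_modEq p x n
  refine ⟨e, fun j => ?_⟩
  rw [hfix] at he
  exact (modEq_sub_iff_add_modEq.mp (he j)).symm

end Word

section Orbit

variable {ι : Type*} {x : ι → ℝ} {σ : Equiv.Perm ι} {m n : ℕ}

theorem modEq_pow_apply (hσ : ∀ j, x (σ j) ≡ x j + n [PMOD (m : ℝ)]) (i : ℕ) (j : ι) :
    x ((σ ^ i) j) ≡ x j + (i * n : ℕ) [PMOD (m : ℝ)] := by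
  induction i with
  | zero => simp
  | succ i ih =>
    rw [pow_succ', Equiv.Perm.mul_apply]
    refine (hσ _).trans ?_
    simpa [add_mul, add_assoc] using ih.add_right (n : ℝ)

theorem injOn_pow_apply (hm : 0 < m) (hσ : ∀ j, x (σ j) ≡ x j + n [PMOD (m : ℝ)]) (j : ι) :
    Set.InjOn (fun i => (σ ^ i) j) (Set.Iio (m / m.gcd n)) := by
  intro a ha b hb hab
  have hb' := modEq_pow_apply hσ b j
  rw [← show (σ ^ a) j = (σ ^ b) j from hab] at hb'
  have h : ((a * n : ℕ) : ℝ) ≡ ((b * n : ℕ) : ℝ) [PMOD (m : ℝ)] :=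
    ((modEq_pow_apply hσ a j).symm.trans hb').add_left_cancel' (x j)
  exact ((natCast_modEq_natCast.mp h).cancel_right_div_gcd hm).eq_of_lt_of_lt ha hb

open scoped Classical in
theorem card_filter_modEq_le [Fintype ι] {d s : ℕ} (hd : 0 < d) (hs : 0 < s)
    (hinj : ∀ j k, x j ≡ x k [PMOD ((d * s : ℕ) : ℝ)] → j = k) (j : ι) :
    #{k | x k ≡ x j [PMOD (d : ℝ)]} ≤ s := by
  have : NeZero s := ⟨hs.ne'⟩
  have hquot : ∀ k, x k ≡ x j [PMOD (d : ℝ)] →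
      ∃ t : ℤ, ⌊(x j - x k) / d⌋ = t ∧ x j - x k = d * t := by
    intro k hk
    obtain ⟨t, ht⟩ := modEq_iff_exists_sub_eq_mul.mp hk
    refine ⟨t, ?_, ht⟩
    rw [ht, mul_div_cancel_left₀ _ (by positivity), Int.floor_intCast]
  calc #{k | x k ≡ x j [PMOD (d : ℝ)]}
      ≤ #(univ : Finset (ZMod s)) :=
        card_le_card_of_injOn (fun k => (⌊(x j - x k) / d⌋ : ZMod s)) (fun _ _ => mem_univ _) ?_
    _ = s := by simp
  intro a ha b hb hab
  obtain ⟨ta, hfa, hta⟩ := hquot a (mem_filter.mp ha).2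
  obtain ⟨tb, hfb, htb⟩ := hquot b (mem_filter.mp hb).2
  simp only [hfa, hfb, ZMod.intCast_eq_intCast_iff_dvd_sub] at hab
  obtain ⟨w, hw⟩ := hab
  refine (hinj b a (modEq_iff_exists_sub_eq_mul.mpr ⟨w, ?_⟩)).symm
  have : (tb : ℝ) - ta = s * w := by exact_mod_cast hw
  push_cast
  linear_combination htb - hta + d * this

open scoped Classical in
theorem card_filter_modEq_gcd [Fintype ι] (hm : 0 < m)
    (hσ : ∀ j, x (σ j) ≡ x j + n [PMOD (m : ℝ)])
    (hinj : ∀ j k, x j ≡ x k [PMOD (m : ℝ)] → j = k) (j : ι) :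
    #{k | x k ≡ x j [PMOD (m.gcd n : ℝ)]} = m / m.gcd n := by
  have hd : 0 < m.gcd n := Nat.gcd_pos_of_pos_left n hm
  have hdm : m.gcd n * (m / m.gcd n) = m := Nat.mul_div_cancel' (Nat.gcd_dvd_left m n)
  refine le_antisymm (card_filter_modEq_le hd (Nat.div_pos (Nat.gcd_le_left n hm) hd)
    (by rwa [hdm]) j) ?_
  have horbit : ∀ i, x ((σ ^ i) j) ≡ x j [PMOD (m.gcd n : ℝ)] := fun i => by
    have hin : (i * n : ℕ) ≡ 0 [MOD m.gcd n] :=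
      (dvd_mul_of_dvd_right (Nat.gcd_dvd_right m n) i).modEq_zero_nat
    simpa using ((modEq_pow_apply hσ i j).of_natCast_dvd (Nat.gcd_dvd_left m n)).trans
      ((AddCommGroup.ModEq.natCast (M := ℝ) hin).add_left (x j))
  simpa using card_le_card_of_injOn (fun i => (σ ^ i) j) (s := range (m / m.gcd n))
    (fun i _ => mem_filter.mpr ⟨mem_univ _, horbit i⟩) (by simpa using injOn_pow_apply hm hσ j)

end Orbit

theorem fixed_point_partition_general (m n : ℕ) (hm : 0 < m)
    (p : ℕ → Fin m) (x : Fin m → ℝ)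
    (hfix : stepsV m p x n = x)
    (halc : ∀ j k : Fin m, j ≠ k → ∀ t : ℤ, x j - x k ≠ (m : ℝ) * t) :
    ∃ B : Fin m → Fin (Nat.gcd m n),
      (∀ c : Fin (Nat.gcd m n),
        (Finset.univ.filter (fun j => B j = c)).card = m / Nat.gcd m n) ∧
      (∀ j k : Fin m, B j = B k ↔ ∃ t : ℤ, x j - x k = (Nat.gcd m n : ℝ) * t) ∧
      (∀ j k : Fin m, j ≠ k → ∀ t : ℤ, x j - x k ≠ (m : ℝ) * t) := by
  classical
  have hinj : ∀ j k, x j ≡ x k [PMOD (m : ℝ)] → j = k := fun j k h => by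
    by_contra hne
    obtain ⟨t, ht⟩ := modEq_iff_exists_sub_eq_mul.mp h
    exact halc k j (Ne.symm hne) t ht
  obtain ⟨σ, hσ⟩ := exists_perm_modEq_of_stepsV_eq_self hfix
  obtain ⟨B, hcard, hB⟩ := exists_fin_of_card_fiber_eq
    (fun j => (x j : ℝ ⧸ AddSubgroup.zmultiples (m.gcd n : ℝ)))
    (Nat.div_pos (Nat.gcd_le_left n hm) (Nat.gcd_pos_of_pos_left n hm))
    (by rw [Fintype.card_fin, Nat.mul_div_cancel' (Nat.gcd_dvd_left m n)])
    fun j => by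
      simpa only [← modEq_iff_eq_mod_zmultiples] using card_filter_modEq_gcd hm hσ hinj j
  refine ⟨B, hcard, fun j k => ?_, halc⟩
  rw [hB, ← modEq_iff_eq_mod_zmultiples, modEq_comm, modEq_iff_exists_sub_eq_mul]

/-- If `gcd(m,n) = d` and `x ∈ V^m` is a fixed point of a word `p ∈ [m]^n` whose
coordinates are pairwise non-congruent mod `m`, then the coordinates can be
partitioned into `d` blocks of size `m/d`, two coordinates lying in the same block
iff their difference is divisible by `d`; moreover no two distinct coordinates
differ by a multiple of `m`. -/
theorem fixed_point_partition (m n : ℕ) (hm : 0 < m) (hn : 0 < n)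
    (p : ℕ → Fin m) (x : Fin m → ℝ) (hx : InV m x)
    (hfix : stepsV m p x n = x)
    (halc : ∀ j k : Fin m, j ≠ k → ∀ t : ℤ, x j - x k ≠ (m : ℝ) * t) :
    ∃ B : Fin m → Fin (Nat.gcd m n),
      (∀ c : Fin (Nat.gcd m n),
        (Finset.univ.filter (fun j => B j = c)).card = m / Nat.gcd m n) ∧
      (∀ j k : Fin m, B j = B k ↔ ∃ t : ℤ, x j - x k = (Nat.gcd m n : ℝ) * t) ∧
      (∀ j k : Fin m, j ≠ k → ∀ t : ℤ, x j - x k ≠ (m : ℝ) * t) :=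
  fixed_point_partition_general m n hm p x hfix halc
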